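/- arXiv:1710.03148 — 7 statements merged into one kernel-verified Lean document; each statement's English description precedes it below -/
import Mathlib

section
/- Let A, B, C be valued σ-structures, let ω be an inverse fractional homomorphism from A to B and ω' an inverse fractional homomorphism from B to C. Define (ω'∘ω) : C^A → ℚ≥0 by (ω'∘ω)(h) = Σ_{h₁ : A→B, h₂ : B→C, h₂∘h₁ = h} ω(h₁)·ω'(h₂). Then ω'∘ω is an inverse fractional homomorphism from A to C. -/
open scoped Classical
noncomputable section

/-- The value codomain `ℚ≥0 ∪ {∞}`. -/
abbrev Val : Type := WithTop NNRat

/-- A valued structure over a signature given by a type `S` of function symbols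
with arities `ar`. -/
structure VStruct (S : Type) (ar : S → ℕ) where
  U : Type
  [fintypeU : Fintype U]
  [decU : DecidableEq U]
  [nonemptyU : Nonempty U]
  val : (f : S) → (Fin (ar f) → U) → Val

attribute [instance] VStruct.fintypeU VStruct.decU VStruct.nonemptyU

variable {S : Type} [Fintype S] {ar : S → ℕ}

/-- Cost of a mapping `h` between the universes of two valued structures. -/
def VStruct.cost (A B : VStruct S ar) (h : A.U → B.U) : Val :=
  ∑ f : S, ∑ x : Fin (ar f) → A.U, A.val f x * B.val f (h ∘ x)

/-- `opt(A,B)`: the minimum cost over all mappings. -/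
def VStruct.opt (A B : VStruct S ar) : Val :=
  Finset.univ.inf' Finset.univ_nonempty (A.cost B)

/-- `f^A(g⁻¹(x))`: sum of `f^A` over the `g`-preimage of the tuple `x`. -/
def VStruct.preSum (A B : VStruct S ar) (g : A.U → B.U) (f : S)
    (x : Fin (ar f) → B.U) : Val :=
  ∑ y ∈ Finset.univ.filter (fun y : Fin (ar f) → A.U => g ∘ y = x), A.val f y

/-- Inverse fractional homomorphism from `A` to `B`. -/
def IsIFH (A B : VStruct S ar) (ω : (A.U → B.U) → NNRat) : Prop :=
  (∑ g : A.U → B.U, ω g) = 1 ∧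
  ∀ (f : S) (x : Fin (ar f) → B.U),
    (∑ g : A.U → B.U, (ω g : Val) * A.preSum B g f x) ≤ B.val f x

/-- `A ≼ B`: `A` improves `B`. -/
def Improves (A B : VStruct S ar) : Prop :=
  ∀ C : VStruct S ar, A.opt C ≤ B.opt C

/-- Valued equivalence. -/
def VEquiv (A B : VStruct S ar) : Prop :=
  ∀ C : VStruct S ar, A.opt C = B.opt C

/-- A valued structure is a core if every inverse fractional homomorphism from
it to itself has only surjective mappings in its support. -/
def IsCore (A : VStruct S ar) : Prop :=
  ∀ ω : (A.U → A.U) → NNRat, IsIFH A A ω →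
    ∀ g : A.U → A.U, 0 < ω g → Function.Surjective g

/-!
The composite weight is the pushforward of `ω ⊗ ω'` along `(g₁, g₂) ↦ g₂ ∘ g₁`, so its total
mass is `1 · 1`. For the valuation inequality, the `(g₂ ∘ g₁)`-preimage of a tuple `x` splits
along the `g₂`-fibre of `x`; averaging over `g₁` first, `ω` bounds each fibre term by `f^B`,
which leaves `B`'s preimage sum of `x` under `g₂`, and its `ω'`-average is at most `f^C(x)`.
-/

section CompWeight

variable {α β γ : Type*} [Fintype α] [DecidableEq α] [Fintype β] [DecidableEq β]
  [Fintype γ] [DecidableEq γ]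

/-- The weight `ω' ∘ ω` of the paper. -/
def compWeight (ω : (α → β) → ℚ≥0) (ω' : (β → γ) → ℚ≥0) (h : α → γ) : ℚ≥0 :=
  ∑ p ∈ Finset.univ.filter (fun p : (α → β) × (β → γ) => p.2 ∘ p.1 = h), ω p.1 * ω' p.2

theorem sum_compWeight (ω : (α → β) → ℚ≥0) (ω' : (β → γ) → ℚ≥0) :
    ∑ h, compWeight ω ω' h = (∑ g₁, ω g₁) * ∑ g₂, ω' g₂ := by
  rw [Finset.sum_mul_sum, ← Fintype.sum_prod_type']
  exact Finset.sum_fiberwise _ (fun p : (α → β) × (β → γ) => p.2 ∘ p.1) _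

theorem sum_compWeight_mul (ω : (α → β) → ℚ≥0) (ω' : (β → γ) → ℚ≥0) (F : (α → γ) → Val) :
    ∑ h, (compWeight ω ω' h : Val) * F h =
      ∑ g₂, (ω' g₂ : Val) * ∑ g₁, (ω g₁ : Val) * F (g₂ ∘ g₁) := by
  calc ∑ h, (compWeight ω ω' h : Val) * F h
      = ∑ h, ∑ p ∈ Finset.univ.filter (fun p : (α → β) × (β → γ) => p.2 ∘ p.1 = h),
          (ω' p.2 : Val) * ((ω p.1 : Val) * F (p.2 ∘ p.1)) := by
        refine Finset.sum_congr rfl fun h _ => ?_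
        rw [compWeight, WithTop.coe_sum, Finset.sum_mul]
        refine Finset.sum_congr rfl fun p hp => ?_
        rw [(Finset.mem_filter.1 hp).2, WithTop.coe_mul]
        ring
    _ = ∑ p : (α → β) × (β → γ), (ω' p.2 : Val) * ((ω p.1 : Val) * F (p.2 ∘ p.1)) :=
        Finset.sum_fiberwise _ _ _
    _ = _ := by simp only [Fintype.sum_prod_type_right, Finset.mul_sum]

end CompWeight

omit [Fintype S] in
theorem VStruct.preSum_comp (A B C : VStruct S ar) (g₁ : A.U → B.U) (g₂ : B.U → C.U)
    (f : S) (x : Fin (ar f) → C.U) :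
    A.preSum C (g₂ ∘ g₁) f x =
      ∑ z ∈ Finset.univ.filter (fun z : Fin (ar f) → B.U => g₂ ∘ z = x), A.preSum B g₁ f z := by
  simp only [VStruct.preSum]
  rw [Finset.sum_fiberwise_eq_sum_filter]
  refine Finset.sum_congr ?_ fun _ _ => rfl
  ext y
  simp [Function.comp_assoc]

omit [Fintype S] in
theorem IsIFH.sum_mul_preSum_comp_le {A B C : VStruct S ar} {ω : (A.U → B.U) → ℚ≥0}
    (hω : IsIFH A B ω) (g₂ : B.U → C.U) (f : S) (x : Fin (ar f) → C.U) :
    ∑ g₁, (ω g₁ : Val) * A.preSum C (g₂ ∘ g₁) f x ≤ B.preSum C g₂ f x := by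
  simp only [VStruct.preSum_comp A B C _ g₂, Finset.mul_sum]
  rw [Finset.sum_comm]
  exact Finset.sum_le_sum fun z _ => hω.2 f z

/-- The composition of inverse fractional homomorphisms is an inverse
fractional homomorphism. -/
theorem stmt1 (A B C : VStruct S ar)
    (ω : (A.U → B.U) → NNRat) (ω' : (B.U → C.U) → NNRat)
    (hω : IsIFH A B ω) (hω' : IsIFH B C ω') :
    IsIFH A C (fun h : A.U → C.U =>
      ∑ p ∈ Finset.univ.filter
        (fun p : (A.U → B.U) × (B.U → C.U) => p.2 ∘ p.1 = h),
        ω p.1 * ω' p.2) := by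
  show IsIFH A C (compWeight ω ω')
  refine ⟨?_, fun f x => ?_⟩
  · rw [sum_compWeight ω ω', hω.1, hω'.1, mul_one]
  · calc ∑ h, (compWeight ω ω' h : Val) * A.preSum C h f x
        = ∑ g₂, (ω' g₂ : Val) * ∑ g₁, (ω g₁ : Val) * A.preSum C (g₂ ∘ g₁) f x :=
          sum_compWeight_mul ω ω' _
      _ ≤ ∑ g₂, (ω' g₂ : Val) * B.preSum C g₂ f x := by
          gcongr with g₂
          exact hω.sum_mul_preSum_comp_le g₂ f x
      _ ≤ C.val f x := hω'.2 f x
end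
end

section
/- Let A be a valued σ-structure and g : A → A a mapping. Suppose there exists an inverse fractional homomorphism ω from A to A with g ∈ supp(ω). Then for every valued σ-structure C and every mapping s : A → C whose cost equals opt(A, C), the cost of s ∘ g also equals opt(A, C). -/
open scoped Classical
noncomputable section

variable {S : Type} [Fintype S] {ar : S → ℕ}

/-! Reindexing `cost(s ∘ g)` by the image tuples turns the defining inequality of an inverse
fractional homomorphism `ω` into `∑ g, ω g · cost(s ∘ g) ≤ cost(s)`. For `s` optimal the
right side is `opt`, while every `cost(s ∘ g)` is at least `opt`; a convex combination of
values `≥ opt` that is `≤ opt` forces each value of positive weight to equal `opt`. -/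

theorem VStruct.opt_le_cost (A B : VStruct S ar) (h : A.U → B.U) : A.opt B ≤ A.cost B h :=
  Finset.inf'_le _ (Finset.mem_univ h)

theorem VStruct.cost_comp (A B C : VStruct S ar) (g : A.U → B.U) (s : B.U → C.U) :
    A.cost C (s ∘ g) =
      ∑ f : S, ∑ y : Fin (ar f) → B.U, A.preSum B g f y * C.val f (s ∘ y) := by
  unfold VStruct.cost VStruct.preSum
  refine Finset.sum_congr rfl fun f _ => ?_
  rw [← Finset.sum_fiberwise Finset.univ (fun x : Fin (ar f) → A.U => g ∘ x)]
  refine Finset.sum_congr rfl fun y _ => ?_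
  rw [Finset.sum_mul]
  refine Finset.sum_congr rfl fun x hx => ?_
  rw [← (Finset.mem_filter.1 hx).2]
  rfl

theorem IsIFH.sum_mul_cost_comp_le {A B : VStruct S ar} {ω : (A.U → B.U) → NNRat}
    (hω : IsIFH A B ω) (C : VStruct S ar) (s : B.U → C.U) :
    ∑ g : A.U → B.U, (ω g : Val) * A.cost C (s ∘ g) ≤ B.cost C s := by
  calc ∑ g : A.U → B.U, (ω g : Val) * A.cost C (s ∘ g)
      = ∑ f : S, ∑ y : Fin (ar f) → B.U,
          (∑ g : A.U → B.U, (ω g : Val) * A.preSum B g f y) * C.val f (s ∘ y) := by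
        simp_rw [VStruct.cost_comp, Finset.mul_sum, Finset.sum_mul, mul_assoc]
        rw [Finset.sum_comm]
        exact Finset.sum_congr rfl fun f _ => Finset.sum_comm
    _ ≤ B.cost C s :=
        Finset.sum_le_sum fun f _ => Finset.sum_le_sum fun y _ =>
          mul_le_mul_left (hω.2 f y) _

theorem eq_of_sum_mul_le {ι : Type*} [Fintype ι] {w : ι → ℚ≥0} (hw : ∑ i, w i = 1)
    {a : ι → Val} {m : Val} (hm : ∀ i, m ≤ a i) (hle : ∑ i, (w i : Val) * a i ≤ m)
    {j : ι} (hj : w j ≠ 0) : a j = m := by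
  rcases eq_or_ne m ⊤ with rfl | hm_top
  · exact top_le_iff.1 (hm j)
  have hsplit : ∑ i, (w i : Val) * a i = m + ∑ i, (w i : Val) * (a i - m) := by
    have hw' : ∑ i, (w i : Val) = 1 := by exact_mod_cast hw
    calc ∑ i, (w i : Val) * a i = ∑ i, (w i : Val) * (m + (a i - m)) := by
          simp_rw [add_tsub_cancel_of_le (hm _)]
      _ = (∑ i, (w i : Val)) * m + ∑ i, (w i : Val) * (a i - m) := by
          rw [Finset.sum_mul, ← Finset.sum_add_distrib]
          simp_rw [mul_add]
      _ = m + ∑ i, (w i : Val) * (a i - m) := by rw [hw', one_mul]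
  have hexcess : ∑ i, (w i : Val) * (a i - m) = 0 :=
    nonpos_iff_eq_zero.1 <| WithTop.le_of_add_le_add_left hm_top <| by
      rwa [add_zero, ← hsplit]
  rcases mul_eq_zero.1 (Finset.sum_eq_zero_iff.1 hexcess j (Finset.mem_univ j)) with h | h
  · exact absurd (by exact_mod_cast h) hj
  · exact le_antisymm (tsub_eq_zero_iff_le.1 h) (hm j)

/-- Composing an optimal mapping with a support mapping of an inverse
fractional self-homomorphism preserves optimality. -/
theorem stmt2 (A : VStruct S ar) (g : A.U → A.U)
    (ω : (A.U → A.U) → NNRat) (hω : IsIFH A A ω) (hg : 0 < ω g)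
    (C : VStruct S ar) (s : A.U → C.U) (hs : A.cost C s = A.opt C) :
    A.cost C (s ∘ g) = A.opt C :=
  eq_of_sum_mul_le hω.1 (fun g' => A.opt_le_cost C (s ∘ g'))
    ((hω.sum_mul_cost_comp_le C s).trans_eq hs) hg.ne'
end
end

section
/- Every valued σ-structure A has a core of A, that is, a valued σ-structure B such that B is a core and B ≡ A; moreover, B can be chosen with universe of size at most |A|. -/
open scoped Classical
noncomputable section

variable {S : Type} [Fintype S] {ar : S → ℕ}

/-!
If `A` is not a core, some inverse fractional homomorphism `ω : A → A` has a non-surjective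
`g` in its support. For every `C` and every optimal `h : A → C`, the IFH inequality gives
`∑ ω g' · cost(h ∘ g') ≤ cost h = opt(A, C)`, while each `cost(h ∘ g') ≥ opt(A, C)`; so `h ∘ g'` is
again optimal for every `g'` in the support. Hence the pushforward of `A` onto the
range of `g`, whose maps `h'` have cost `cost(h' ∘ g)`, is equivalent to `A` and strictly
smaller. Induction on `|A|` ends at a core.
-/

open Finset

theorem le_of_sum_mul_le {ι : Type} [Fintype ι] {ω : ι → ℚ≥0} (hω : ∑ i, ω i = 1)
    {a : ι → Val} {q : Val} (hq : ∀ i, q ≤ a i) (hsum : ∑ i, (ω i : Val) * a i ≤ q)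
    {i : ι} (hi : 0 < ω i) : a i ≤ q := by
  by_contra! hlt
  lift q to ℚ≥0 using hlt.ne_top
  have hstrict : (ω i : Val) * q < (ω i : Val) * a i := by
    cases h : a i using WithTop.recTopCoe with
    | top => simpa [WithTop.mul_top (WithTop.coe_ne_zero.mpr hi.ne')] using
        WithTop.coe_lt_top (ω i * q)
    | coe b =>
      rw [h, WithTop.coe_lt_coe] at hlt
      exact_mod_cast mul_lt_mul_of_pos_left hlt hi
  have hq_eq : ∑ j, (ω j : Val) * q = q := by
    rw [← sum_mul, ← WithTop.coe_sum, hω, WithTop.coe_one, one_mul]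
  have hrest_ne_top : ∑ j ∈ univ.erase i, (ω j : Val) * q ≠ ⊤ := by
    simp only [← WithTop.coe_mul, ← WithTop.coe_sum, ne_eq, WithTop.coe_ne_top,
      not_false_eq_true]
  have hrest_le : ∑ j ∈ univ.erase i, (ω j : Val) * q ≤ ∑ j ∈ univ.erase i, (ω j : Val) * a j :=
    sum_le_sum fun j _ => by gcongr; exact hq j
  have : (q : Val) < ∑ j, (ω j : Val) * a j := by
    rw [← hq_eq, ← add_sum_erase _ _ (mem_univ i), ← add_sum_erase _ _ (mem_univ i)]
    exact WithTop.add_lt_add_of_lt_of_le hrest_ne_top hstrict hrest_le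
  exact (this.trans_le hsum).false

namespace VStruct

variable (A C : VStruct S ar)

theorem opt_le_cost_s6 (h : A.U → C.U) : A.opt C ≤ A.cost C h :=
  inf'_le _ (mem_univ _)

theorem exists_cost_eq_opt : ∃ h : A.U → C.U, A.cost C h = A.opt C := by
  obtain ⟨h, -, hh⟩ := exists_mem_eq_inf' univ_nonempty (A.cost C)
  exact ⟨h, hh.symm⟩

theorem cost_comp_s6 (B : VStruct S ar) (g : A.U → B.U) (h : B.U → C.U) :
    A.cost C (h ∘ g) = ∑ f, ∑ x, A.preSum B g f x * C.val f (h ∘ x) := by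
  refine sum_congr rfl fun f _ => ?_
  simp only [preSum, sum_mul]
  rw [← sum_fiberwise univ (fun y : Fin (ar f) → A.U => g ∘ y)]
  refine sum_congr rfl fun x _ => sum_congr rfl fun y hy => ?_
  rw [← (mem_filter.mp hy).2]
  rfl

def map {V : Type} [Fintype V] [DecidableEq V] [Nonempty V] (g : A.U → V) : VStruct S ar where
  U := V
  val f x := ∑ y ∈ univ.filter (fun y : Fin (ar f) → A.U => g ∘ y = x), A.val f y

theorem cost_map {V : Type} [Fintype V] [DecidableEq V] [Nonempty V] (g : A.U → V)
    (h : V → C.U) : (A.map g).cost C h = A.cost C (h ∘ g) :=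
  (A.cost_comp_s6 C (A.map g) g h).symm

theorem opt_le_opt_map {V : Type} [Fintype V] [DecidableEq V] [Nonempty V] (g : A.U → V) :
    A.opt C ≤ (A.map g).opt C :=
  le_inf' _ _ fun h _ => (A.cost_map C g h).symm ▸ A.opt_le_cost_s6 C (h ∘ g)

end VStruct

namespace IsIFH

variable {A : VStruct S ar}

theorem sum_mul_cost_comp_le_s6 {B : VStruct S ar} {ω : (A.U → B.U) → ℚ≥0} (hω : IsIFH A B ω) (C : VStruct S ar) (h : B.U → C.U) :
    ∑ g, (ω g : Val) * A.cost C (h ∘ g) ≤ B.cost C h := by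
  simp only [VStruct.cost_comp_s6 A C B, mul_sum]
  rw [sum_comm]
  refine sum_le_sum fun f _ => ?_
  rw [sum_comm]
  refine sum_le_sum fun x _ => ?_
  simp only [← mul_assoc, ← sum_mul]
  gcongr
  exact hω.2 f x

theorem cost_comp_le_opt {ω : (A.U → A.U) → ℚ≥0} (hω : IsIFH A A ω) {g : A.U → A.U}
    (hg : 0 < ω g) (C : VStruct S ar) {h : A.U → C.U} (hh : A.cost C h = A.opt C) :
    A.cost C (h ∘ g) ≤ A.opt C :=
  le_of_sum_mul_le hω.1 (fun g' => A.opt_le_cost_s6 C (h ∘ g'))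
    (hh ▸ hω.sum_mul_cost_comp_le_s6 C h) hg

theorem vEquiv_map_rangeFactorization {ω : (A.U → A.U) → ℚ≥0} (hω : IsIFH A A ω)
    {g : A.U → A.U} (hg : 0 < ω g) : VEquiv (A.map (Set.rangeFactorization g)) A := by
  intro C
  refine le_antisymm ?_ (A.opt_le_opt_map C _)
  obtain ⟨h, hh⟩ := A.exists_cost_eq_opt C
  calc (A.map (Set.rangeFactorization g)).opt C
      ≤ (A.map (Set.rangeFactorization g)).cost C (h ∘ Subtype.val) := VStruct.opt_le_cost_s6 _ _ _
    _ = A.cost C (h ∘ g) := A.cost_map C _ _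
    _ ≤ A.opt C := hω.cost_comp_le_opt hg C hh

end IsIFH

theorem exists_vEquiv_card_lt_of_not_isCore {A : VStruct S ar} (hA : ¬IsCore A) :
    ∃ B : VStruct S ar, VEquiv B A ∧ Fintype.card B.U < Fintype.card A.U := by
  simp only [IsCore, not_forall] at hA
  obtain ⟨ω, hω, g, hg, hg_not_surj⟩ := hA
  obtain ⟨a, ha⟩ := not_forall.mp hg_not_surj
  refine ⟨_, hω.vEquiv_map_rangeFactorization hg, ?_⟩
  exact Fintype.card_subtype_lt (p := (· ∈ Set.range g)) (x := a) (by simpa using ha)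

/-- Every valued structure has a core, over a universe of size at most `|A|`. -/
theorem stmt6 (A : VStruct S ar) :
    ∃ B : VStruct S ar, IsCore B ∧ VEquiv B A ∧
      Fintype.card B.U ≤ Fintype.card A.U := by
  induction hn : Fintype.card A.U using Nat.strong_induction_on generalizing A with
  | _ n ih =>
    by_cases hA : IsCore A
    · exact ⟨A, hA, fun _ => rfl, hn.le⟩
    obtain ⟨B, hBA, hcard⟩ := exists_vEquiv_card_lt_of_not_isCore hA
    obtain ⟨B', hB', hB'B, hcard'⟩ := ih _ (hn ▸ hcard) B rfl
    exact ⟨B', hB', fun C => (hB'B C).trans (hBA C), by omega⟩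
end
end

section
/- Let A be a valued σ-structure and A' a core of A (i.e., A' is a core and A' ≡ A). Then the treewidth of A' is at most the treewidth of A, where the treewidth of a valued structure is the treewidth of the Gaifman graph of its positive part. -/
open scoped Classical
noncomputable section

variable {S : Type} [Fintype S] {ar : S → ℕ}

/-- The Gaifman graph of the positive part of a valued structure. -/
def gaifman (A : VStruct S ar) : SimpleGraph A.U :=
  SimpleGraph.fromRel (fun u v => ∃ (f : S) (x : Fin (ar f) → A.U),
    0 < A.val f x ∧ (∃ i, x i = u) ∧ (∃ j, x j = v))

/-- `(T, β)` (with tree `tG` on node type `T`) is a tree decomposition of `G`. -/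
structure IsTreeDecomp {V T : Type} (G : SimpleGraph V) (tG : SimpleGraph T)
    (β : T → Set V) : Prop where
  isTree : tG.IsTree
  covers : ∀ v : V, ∃ t : T, v ∈ β t
  edges : ∀ ⦃u v : V⦄, G.Adj u v → ∃ t : T, u ∈ β t ∧ v ∈ β t
  conn : ∀ v : V, (tG.induce {t : T | v ∈ β t}).Connected

/-- `G` has treewidth at most `k`. -/
def TreewidthAtMost {V : Type} (G : SimpleGraph V) (k : ℕ) : Prop :=
  ∃ (T : Type) (tG : SimpleGraph T) (β : T → Set V),
    IsTreeDecomp G tG β ∧ ∀ t : T, (β t).ncard ≤ k + 1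

/-!
Since `A' ≡ A`, we have `opt(A', C) ≤ opt(A, C)` and `opt(A, C) ≤ opt(A', C)` for all `C`, and LP
duality (Farkas' lemma, proved here by Fourier–Motzkin elimination) turns these inequalities into
inverse fractional homomorphisms `ω₁` from `A'` to `A` and `ω₂` from `A` to `A'`. Composing them
gives an inverse fractional homomorphism from the core `A'` to itself whose support contains
`g' ∘ g` for every `g` in the support of `ω₁` and `g'` in that of `ω₂`; so `g' ∘ g` is surjective
and `g` is injective. Such a `g` also sends tuples with positive value in `A'` to tuples with
positive value in `A`, so it is an injective homomorphism between the Gaifman graphs, and pulling a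
tree decomposition of `A` back along `g` does not increase its width.
-/

universe u

open Finset Function

section Farkas

variable {𝕜 J : Type*} [Field 𝕜] [LinearOrder 𝕜] {I : Type*}

/-- A row `(a, b)` stands for the constraint `a ⬝ᵥ x ≤ b`. -/
def IsFeasible [Fintype J] (c : I → (J → 𝕜) × 𝕜) : Prop :=
  ∃ x : J → 𝕜, ∀ i, (c i).1 ⬝ᵥ x ≤ (c i).2

/-- Fourier–Motzkin elimination of `x j`; indices yielding no new row carry the row `0`. -/
def fourierMotzkin (c : I → (J → 𝕜) × 𝕜) (j : J) : I ⊕ (I × I) → (J → 𝕜) × 𝕜 :=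
  Sum.elim (fun i => if (c i).1 j = 0 then c i else 0)
    (fun pq => if 0 < (c pq.1).1 j ∧ (c pq.2).1 j < 0 then
      (-(c pq.2).1 j) • c pq.1 + (c pq.1).1 j • c pq.2 else 0)

lemma fourierMotzkin_fst_eq_zero {c : I → (J → 𝕜) × 𝕜} {j : J} {s : Finset J}
    (hc : ∀ i, ∀ j' ∉ insert j s, (c i).1 j' = 0) (k : I ⊕ (I × I)) {j' : J} (hj' : j' ∉ s) :
    (fourierMotzkin c j k).1 j' = 0 := by
  by_cases hj : j' = j
  · subst hj
    rcases k with i | ⟨p, q⟩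
    · simp only [fourierMotzkin, Sum.elim_inl]
      split_ifs with h <;> simp [h]
    · simp only [fourierMotzkin, Sum.elim_inr]
      split_ifs <;> simp only [Prod.fst_add, Prod.smul_fst, Pi.add_apply, Pi.smul_apply,
        smul_eq_mul, Prod.fst_zero, Pi.zero_apply]
      ring
  · have hzero : ∀ i, (c i).1 j' = 0 := fun i => hc i j' (by simp [hj, hj'])
    rcases k with i | ⟨p, q⟩
    · simp only [fourierMotzkin, Sum.elim_inl]
      split_ifs <;> simp [hzero]
    · simp only [fourierMotzkin, Sum.elim_inr]
      split_ifs <;> simp [hzero]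

variable [IsStrictOrderedRing 𝕜]

lemma exists_forall_mul_le {ι : Type*} [Finite ι] (l r : ι → 𝕜)
    (hzero : ∀ i, l i = 0 → 0 ≤ r i)
    (hpair : ∀ p q, 0 < l p → l q < 0 → 0 ≤ -l q * r p + l p * r q) :
    ∃ t, ∀ i, t * l i ≤ r i := by
  by_cases hneg : ∃ q, l q < 0
  · obtain ⟨q, hq, hmax⟩ := Set.exists_max_image {q | l q < 0} (fun q => r q / l q)
      (Set.toFinite _) hneg
    refine ⟨r q / l q, fun i => ?_⟩
    rcases lt_trichotomy (l i) 0 with hi | hi | hi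
    · exact (div_le_iff_of_neg hi).1 (hmax i hi)
    · simpa [hi] using hzero i hi
    · rw [div_mul_eq_mul_div, div_le_iff_of_neg hq]
      nlinarith [hpair i q hi hq]
  · push Not at hneg
    obtain ⟨m, hm⟩ := (Set.finite_range fun i => r i / l i).bddBelow
    refine ⟨m, fun i => ?_⟩
    rcases (hneg i).eq_or_lt with hi | hi
    · rw [← hi, mul_zero]
      exact hzero i hi.symm
    · exact (le_div_iff₀ hi).1 (hm ⟨i, rfl⟩)

lemma fourierMotzkin_mem_hull (c : I → (J → 𝕜) × 𝕜) (j : J) (k : I ⊕ (I × I)) :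
    fourierMotzkin c j k ∈ PointedCone.hull 𝕜 (Set.range c) := by
  have hmem : ∀ i, c i ∈ PointedCone.hull 𝕜 (Set.range c) :=
    fun i => PointedCone.subset_hull ⟨i, rfl⟩
  rcases k with i | ⟨p, q⟩
  · simp only [fourierMotzkin, Sum.elim_inl]
    split_ifs
    exacts [hmem i, zero_mem _]
  · simp only [fourierMotzkin, Sum.elim_inr]
    split_ifs with h
    · exact add_mem (PointedCone.smul_mem _ (neg_nonneg.2 h.2.le) (hmem p))
        (PointedCone.smul_mem _ h.1.le (hmem q))
    · exact zero_mem _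

variable [Fintype J]

lemma IsFeasible.of_fourierMotzkin [Finite I] {c : I → (J → 𝕜) × 𝕜} {j : J}
    (h : IsFeasible (fourierMotzkin c j)) : IsFeasible c := by
  obtain ⟨x, hx⟩ := h
  obtain ⟨t, ht⟩ := exists_forall_mul_le (fun i => (c i).1 j) (fun i => (c i).2 - (c i).1 ⬝ᵥ x)
    (fun i hi => by simpa [fourierMotzkin, hi] using hx (Sum.inl i))
    (fun p q hp hq => by
      have := hx (Sum.inr (p, q))
      simp only [fourierMotzkin, Sum.elim_inr, if_pos (And.intro hp hq), Prod.fst_add,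
        Prod.smul_fst, Prod.snd_add, Prod.smul_snd, add_dotProduct, smul_dotProduct,
        smul_eq_mul] at this
      linear_combination this)
  refine ⟨x + t • Pi.single j 1, fun i => ?_⟩
  rw [dotProduct_add, dotProduct_smul, dotProduct_single, smul_eq_mul, mul_one]
  linarith [ht i]

theorem isFeasible_or_mem_hull {I : Type u} [Finite I] (c : I → (J → 𝕜) × 𝕜) :
    IsFeasible c ∨ ((0, -1) : (J → 𝕜) × 𝕜) ∈ PointedCone.hull 𝕜 (Set.range c) := by
  suffices key : ∀ (s : Finset J) (I : Type u) [Finite I] (c : I → (J → 𝕜) × 𝕜),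
      (∀ i, ∀ j ∉ s, (c i).1 j = 0) →
      IsFeasible c ∨ ((0, -1) : (J → 𝕜) × 𝕜) ∈ PointedCone.hull 𝕜 (Set.range c) from
    key Finset.univ I c (by simp)
  intro s
  induction s using Finset.induction_on with
  | empty =>
    intro I _ c hc
    by_cases hb : ∀ i, 0 ≤ (c i).2
    · exact Or.inl ⟨0, fun i => by simpa using hb i⟩
    · push Not at hb
      obtain ⟨i, hi⟩ := hb
      have hci : (c i).1 = 0 := funext fun j => hc i j (Finset.notMem_empty j)
      have hscale : ((0, -1) : (J → 𝕜) × 𝕜) = (-(c i).2)⁻¹ • c i := by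
        ext <;> simp [hci, hi.ne]
      rw [hscale]
      exact Or.inr (PointedCone.smul_mem _ (inv_nonneg.2 (neg_nonneg.2 hi.le))
        (PointedCone.subset_hull ⟨i, rfl⟩))
  | insert j s _ ih =>
    intro I _ c hc
    refine (ih _ (fourierMotzkin c j) fun k j' hj' => fourierMotzkin_fst_eq_zero hc k hj').imp
      IsFeasible.of_fourierMotzkin fun h => ?_
    exact Submodule.span_le.2 (Set.range_subset_iff.2 (fourierMotzkin_mem_hull c j)) h

lemma exists_pos_forall_lt_of_add_one_le {G R : Type*} [Fintype R] (P : G → R → 𝕜) (b : R → 𝕜)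
    (hP : ∀ g r, 0 ≤ P g r) (hb : ∀ r, 0 ≤ b r) (y : R → 𝕜) (hy : ∀ r, 0 ≤ y r)
    (hgap : ∀ g, ∑ r, y r * b r + 1 ≤ ∑ r, y r * P g r) :
    ∃ y' : R → 𝕜, (∀ r, 0 < y' r) ∧ ∀ g, ∑ r, b r * y' r < ∑ r, P g r * y' r := by
  obtain ⟨ε, hε, hεb⟩ : ∃ ε : 𝕜, 0 < ε ∧ ε * ∑ r, b r < 1 := by
    have hM : 0 ≤ ∑ r, b r := Finset.sum_nonneg fun r _ => hb r
    refine ⟨1 / (∑ r, b r + 1), by positivity, ?_⟩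
    rw [one_div_mul_eq_div, div_lt_one (by positivity)]
    linarith
  refine ⟨fun r => y r + ε, fun r => add_pos_of_nonneg_of_pos (hy r) hε, fun g => ?_⟩
  calc ∑ r, b r * (y r + ε) = ∑ r, y r * b r + ε * ∑ r, b r := by
        simp only [mul_add, Finset.sum_add_distrib, Finset.mul_sum]
        congr 1 <;> exact Finset.sum_congr rfl fun r _ => by ring
    _ < ∑ r, y r * b r + 1 := by linarith
    _ ≤ ∑ r, y r * P g r := hgap g
    _ ≤ ∑ r, P g r * (y r + ε) := Finset.sum_le_sum fun r _ => by nlinarith [hP g r, hy r]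

theorem exists_stochastic_or_exists_pos_lt {G R : Type*} [Fintype G] [Fintype R]
    (P : G → R → 𝕜) (b : R → 𝕜) (hP : ∀ g r, 0 ≤ P g r) (hb : ∀ r, 0 ≤ b r) :
    (∃ ω : G → 𝕜, (∀ g, 0 ≤ ω g) ∧ ∑ g, ω g = 1 ∧ ∀ r, ∑ g, ω g * P g r ≤ b r) ∨
    ∃ y : R → 𝕜, (∀ r, 0 < y r) ∧ ∀ g, ∑ r, b r * y r < ∑ r, P g r * y r := by
  -- rows `∑ g, P g r * ω g ≤ b r`, `-ω g ≤ 0` and `-∑ g, ω g ≤ -1`; since `P, b ≥ 0`, a feasible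
  -- `ω` stays feasible after normalization
  let c : R ⊕ G ⊕ Unit → (G → 𝕜) × 𝕜 := Sum.elim (fun r => (fun g => P g r, b r))
    (Sum.elim (fun g => (-Pi.single g 1, 0)) fun _ => (-1, -1))
  rcases isFeasible_or_mem_hull c with ⟨x, hx⟩ | hmem
  · have hx_nonneg : ∀ g, 0 ≤ x g := fun g => by simpa [c] using hx (Sum.inr (Sum.inl g))
    have hx_sum : 1 ≤ ∑ g, x g := by simpa [c, dotProduct] using hx (Sum.inr (Sum.inr ()))
    have hx_pos : 0 < ∑ g, x g := by linarith
    refine Or.inl ⟨fun g => x g / ∑ g, x g, fun g => div_nonneg (hx_nonneg g) hx_pos.le,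
      by rw [← Finset.sum_div, div_self hx_pos.ne'], fun r => ?_⟩
    calc ∑ g, x g / (∑ g, x g) * P g r = (∑ g, P g r * x g) / ∑ g, x g := by
          rw [Finset.sum_div]
          exact Finset.sum_congr rfl fun g _ => by ring
      _ ≤ b r / ∑ g, x g :=
          div_le_div_of_nonneg_right (by simpa [c, dotProduct] using hx (Sum.inl r)) hx_pos.le
      _ ≤ b r := div_le_self (hb r) hx_sum
  · obtain ⟨μ, hμ⟩ := (Submodule.mem_span_range_iff_exists_fun _).1 hmem
    have hfst (g : G) : ∑ r, (μ (Sum.inl r) : 𝕜) * P g r - μ (Sum.inr (Sum.inl g))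
        - μ (Sum.inr (Sum.inr ())) = 0 := by
      simpa [c, Fintype.sum_sum_type, Prod.fst_sum, Finset.sum_apply, Pi.single_apply,
        ← Nonneg.coe_smul, sub_eq_add_neg, add_assoc] using congrFun (congrArg Prod.fst hμ) g
    have hsnd : ∑ r, (μ (Sum.inl r) : 𝕜) * b r - μ (Sum.inr (Sum.inr ())) = -1 := by
      simpa [c, Fintype.sum_sum_type, Prod.snd_sum, ← Nonneg.coe_smul, sub_eq_add_neg]
        using congrArg Prod.snd hμ
    exact Or.inr (exists_pos_forall_lt_of_add_one_le P b hP hb (fun r => (μ (Sum.inl r) : 𝕜))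
      (fun r => (μ _).2) fun g => by linarith [hfst g, (μ (Sum.inr (Sum.inl g))).2])

end Farkas

theorem Fintype.sum_eq_sum_subtype {ι M : Type*} [Fintype ι] [AddCommMonoid M] (p : ι → Prop)
    [DecidablePred p] {f : ι → M} (hf : ∀ i, ¬ p i → f i = 0) :
    ∑ i, f i = ∑ i : {i // p i}, f i := by
  rw [← Fintype.sum_subtype_add_sum_subtype p f,
    Fintype.sum_eq_zero (fun i : {i // ¬ p i} => f i) fun i => hf i i.2, add_zero]

theorem exists_stochastic_of_forall_exists_le {G R : Type*} [Fintype G] [Fintype R]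
    (P : G → R → Val) (b : R → Val)
    (h : ∀ c : R → ℚ≥0, ∃ g, ∑ r, P g r * c r ≤ ∑ r, b r * c r) :
    ∃ ω : G → ℚ≥0, ∑ g, ω g = 1 ∧ ∀ r, ∑ g, (ω g : Val) * P g r ≤ b r := by
  -- Rows with `b r = ⊤` impose nothing and columns with an infinite entry in a finite row must get
  -- weight `0`, so we dualize the finite submatrix; a positive dual `y` makes the discarded columns
  -- cost `⊤`.
  let Good (g : G) : Prop := ∀ r, b r ≠ ⊤ → P g r ≠ ⊤
  let p (g : {g // Good g}) (r : {r // b r ≠ ⊤}) : ℚ≥0 := (P g r).untop (g.2 r r.2)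
  let q (r : {r // b r ≠ ⊤}) : ℚ≥0 := (b r).untop r.2
  have hp (g : {g // Good g}) (r : {r // b r ≠ ⊤}) : P g r = p g r := (WithTop.coe_untop _ _).symm
  have hq (r : {r // b r ≠ ⊤}) : b r = q r := (WithTop.coe_untop _ _).symm
  rcases exists_stochastic_or_exists_pos_lt (fun g r => (p g r : ℚ)) (fun r => (q r : ℚ))
    (fun _ _ => (p _ _).2) (fun _ => (q _).2) with ⟨ω, hω0, hω1, hωP⟩ | ⟨y, hy0, hy⟩
  · let ω' (g : G) : ℚ≥0 := if hg : Good g then (ω ⟨g, hg⟩).toNNRat else 0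
    have hω' (g : {g // Good g}) : (ω' g : ℚ) = ω g := by simp [ω', g.2, Rat.coe_toNNRat _ (hω0 g)]
    have hsum {M : Type} [AddCommMonoid M] (F : ℚ≥0 → G → M) (hF : ∀ g, F 0 g = 0) :
        ∑ g, F (ω' g) g = ∑ g : {g // Good g}, F (ω' g) g :=
      Fintype.sum_eq_sum_subtype Good fun g hg => by simp [ω', hg, hF]
    refine ⟨ω', ?_, fun r => ?_⟩
    · rw [hsum (fun w _ => w) fun _ => rfl]
      exact_mod_cast (show ∑ g : {g // Good g}, (ω' g : ℚ) = 1 by simpa [hω'] using hω1)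
    · by_cases hr : b r = ⊤
      · simp [hr]
      rw [hsum (fun w g => (w : Val) * P g r) fun _ => by simp, hq ⟨r, hr⟩]
      simp only [hp _ ⟨r, hr⟩]
      exact_mod_cast (show ∑ g : {g // Good g}, (ω' g : ℚ) * p g ⟨r, hr⟩ ≤ q ⟨r, hr⟩ by
        simpa [hω'] using hωP ⟨r, hr⟩)
  · let c (r : R) : ℚ≥0 := if hr : b r ≠ ⊤ then (y ⟨r, hr⟩).toNNRat else 0
    have hc (r : {r // b r ≠ ⊤}) : (c r : ℚ) = y r := by simp [c, r.2, Rat.coe_toNNRat _ (hy0 r).le]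
    have hsum (F : R → Val) : ∑ r, F r * c r = ∑ r : {r // b r ≠ ⊤}, F r * c r :=
      Fintype.sum_eq_sum_subtype _ fun r hr => by simp [c, hr]
    obtain ⟨g, hg⟩ := h c
    rw [hsum, hsum] at hg
    simp only [hq] at hg
    by_cases hgood : Good g
    · simp only [hp ⟨g, hgood⟩] at hg
      have hgq : ∑ r, (p ⟨g, hgood⟩ r : ℚ) * c r ≤ ∑ r, (q r : ℚ) * c r := by exact_mod_cast hg
      simp only [hc] at hgq
      exact absurd hgq (hy ⟨g, hgood⟩).not_ge
    · obtain ⟨r, hr, hPr⟩ : ∃ r, b r ≠ ⊤ ∧ P g r = ⊤ := by simpa [Good] using hgood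
      have hcr : (c r : Val) ≠ 0 := by simpa [c, hr] using hy0 ⟨r, hr⟩
      rw [WithTop.sum_eq_top.2 ⟨⟨r, hr⟩, mem_univ _, by rw [hPr, WithTop.top_mul hcr]⟩,
        top_le_iff] at hg
      exact (WithTop.coe_ne_top (by exact_mod_cast hg)).elim

theorem sum_sum_fiber_mul {α β M : Type*} [Fintype α] [Fintype β] [DecidableEq β] [CommSemiring M]
    (φ : α → β) (w : α → M) (F : β → M) :
    ∑ b, (∑ a with φ a = b, w a) * F b = ∑ a, w a * F (φ a) := by
  simp_rw [Finset.sum_mul]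
  rw [← Finset.sum_fiberwise univ φ fun a => w a * F (φ a)]
  exact Finset.sum_congr rfl fun b _ => Finset.sum_congr rfl fun a ha => by
    rw [(Finset.mem_filter.1 ha).2]

theorem sum_filter_comp_eq {α β γ M : Type*} [Fintype α] [Fintype β] [DecidableEq β]
    [DecidableEq γ] [AddCommMonoid M] (φ : α → β) (ψ : β → γ) (F : α → M) (c : γ) :
    ∑ a with ψ (φ a) = c, F a = ∑ b with ψ b = c, ∑ a with φ a = b, F a := by
  rw [← Finset.sum_fiberwise_of_maps_to (g := φ) (t := {b | ψ b = c}) fun a ha => by simpa using ha]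
  refine Finset.sum_congr rfl fun b hb => Finset.sum_congr ?_ fun _ _ => rfl
  ext a
  simp only [Finset.mem_filter, Finset.mem_univ, true_and] at hb ⊢
  exact ⟨And.right, fun h => ⟨h ▸ hb, h⟩⟩

namespace VStruct

theorem cost_eq_sum_preSum (A B : VStruct S ar) (g : A.U → B.U) :
    A.cost B g = ∑ f, ∑ x, A.preSum B g f x * B.val f x := by
  refine Finset.sum_congr rfl fun f _ => ?_
  rw [← Finset.sum_fiberwise univ (g ∘ ·)]
  refine Finset.sum_congr rfl fun x _ => ?_
  rw [preSum, Finset.sum_mul]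
  exact Finset.sum_congr rfl fun y hy => by rw [(Finset.mem_filter.1 hy).2]

end VStruct

theorem exists_isIFH_of_improves {A B : VStruct S ar} (h : Improves A B) :
    ∃ ω, IsIFH A B ω := by
  obtain ⟨ω, hω, hωP⟩ := exists_stochastic_of_forall_exists_le (R := Σ f, Fin (ar f) → B.U)
    (fun g r => A.preSum B g r.1 r.2) (fun r => B.val r.1 r.2) fun c => by
      let C : VStruct S ar := { U := B.U, val := fun f x => c ⟨f, x⟩ }
      obtain ⟨g, -, hg⟩ := Finset.exists_mem_eq_inf' univ_nonempty (A.cost C)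
      refine ⟨g, ?_⟩
      calc ∑ r, A.preSum B g r.1 r.2 * c r = A.cost C g := by
            rw [VStruct.cost_eq_sum_preSum, Fintype.sum_sigma]
            rfl
        _ = A.opt C := hg.symm
        _ ≤ B.opt C := h C
        _ ≤ B.cost C id := Finset.inf'_le _ (mem_univ _)
        _ = ∑ r, B.val r.1 r.2 * c r := by rw [VStruct.cost, Fintype.sum_sigma]; rfl
  exact ⟨ω, hω, fun f x => hωP ⟨f, x⟩⟩

section

variable {S : Type} {ar : S → ℕ}

/-- The law of `g' ∘ g` for independent `g ∼ ω₁` and `g' ∼ ω₂`. -/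
def ifhComp {A B C : VStruct S ar} (ω₁ : (A.U → B.U) → ℚ≥0) (ω₂ : (B.U → C.U) → ℚ≥0)
    (e : A.U → C.U) : ℚ≥0 :=
  ∑ p : (A.U → B.U) × (B.U → C.U) with p.2 ∘ p.1 = e, ω₁ p.1 * ω₂ p.2

variable {A B C : VStruct S ar} {ω₁ : (A.U → B.U) → ℚ≥0} {ω₂ : (B.U → C.U) → ℚ≥0}

theorem ifhComp_ne_zero {g : A.U → B.U} {g' : B.U → C.U} (hg : ω₁ g ≠ 0) (hg' : ω₂ g' ≠ 0) :
    ifhComp ω₁ ω₂ (g' ∘ g) ≠ 0 :=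
  (lt_of_lt_of_le (pos_iff_ne_zero.2 (mul_ne_zero hg hg'))
    (Finset.single_le_sum (f := fun p : (A.U → B.U) × (B.U → C.U) => ω₁ p.1 * ω₂ p.2)
      (fun _ _ => zero_le) (by simp : (g, g') ∈ _))).ne'

namespace IsIFH

theorem comp (h₁ : IsIFH A B ω₁) (h₂ : IsIFH B C ω₂) : IsIFH A C (ifhComp ω₁ ω₂) := by
  have hsum (F : (A.U → C.U) → Val) : ∑ e, (ifhComp ω₁ ω₂ e : Val) * F e =
      ∑ g', (ω₂ g' : Val) * ∑ g, (ω₁ g : Val) * F (g' ∘ g) := by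
    simp only [ifhComp, WithTop.coe_sum, WithTop.coe_mul]
    rw [sum_sum_fiber_mul (fun p : (A.U → B.U) × (B.U → C.U) => p.2 ∘ p.1),
      Fintype.sum_prod_type_right]
    simp_rw [Finset.mul_sum, mul_assoc, mul_left_comm (ω₂ _ : Val)]
  refine ⟨?_, fun f x => ?_⟩
  · have hmass := sum_sum_fiber_mul (fun p : (A.U → B.U) × (B.U → C.U) => p.2 ∘ p.1)
      (fun p => ω₁ p.1 * ω₂ p.2) fun _ => 1
    simp only [mul_one] at hmass
    simp only [ifhComp]
    rw [hmass, Fintype.sum_prod_type, ← Finset.sum_mul_sum, h₁.1, h₂.1, mul_one]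
  have hpre (g : A.U → B.U) (g' : B.U → C.U) :
      A.preSum C (g' ∘ g) f x = ∑ z with g' ∘ z = x, A.preSum B g f z :=
    sum_filter_comp_eq (g ∘ ·) (g' ∘ ·) (A.val f) x
  calc ∑ e, (ifhComp ω₁ ω₂ e : Val) * A.preSum C e f x
      = ∑ g', (ω₂ g' : Val) * ∑ z with g' ∘ z = x, ∑ g, (ω₁ g : Val) * A.preSum B g f z := by
        rw [hsum]
        simp_rw [hpre, Finset.mul_sum]
        exact Finset.sum_congr rfl fun g' _ => by rw [Finset.sum_comm]
    _ ≤ ∑ g', (ω₂ g' : Val) * ∑ z with g' ∘ z = x, B.val f z := by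
        gcongr with g' _ z
        exact h₁.2 f z
    _ ≤ C.val f x := h₂.2 f x

theorem exists_ne_zero (h : IsIFH A B ω₁) : ∃ g, ω₁ g ≠ 0 := by
  obtain ⟨g, -, hg⟩ := Finset.exists_ne_zero_of_sum_ne_zero (h.1.symm ▸ one_ne_zero)
  exact ⟨g, hg⟩

theorem val_pos (h : IsIFH A B ω₁) {g : A.U → B.U} (hg : ω₁ g ≠ 0) {f : S}
    {x : Fin (ar f) → A.U} (hx : 0 < A.val f x) : 0 < B.val f (g ∘ x) :=
  calc 0 < (ω₁ g : Val) * A.val f x :=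
        CanonicallyOrderedAdd.mul_pos.2 ⟨by exact_mod_cast pos_iff_ne_zero.2 hg, hx⟩
    _ ≤ ω₁ g * A.preSum B g f (g ∘ x) := by
        gcongr
        exact Finset.single_le_sum (f := A.val f) (fun _ _ => zero_le) (by simp)
    _ ≤ ∑ g', ω₁ g' * A.preSum B g' f (g ∘ x) :=
        Finset.single_le_sum (f := fun g' => (ω₁ g' : Val) * A.preSum B g' f (g ∘ x))
          (fun _ _ => zero_le) (mem_univ g)
    _ ≤ B.val f (g ∘ x) := h.2 f _

end IsIFH

def gaifmanHom {A B : VStruct S ar} (g : A.U → B.U) (hg : Injective g)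
    (hpos : ∀ f x, 0 < A.val f x → 0 < B.val f (g ∘ x)) : gaifman A →g gaifman B where
  toFun := g
  map_rel' := by
    rintro u v ⟨hne, hrel⟩
    refine ⟨hg.ne hne, hrel.imp ?_ ?_⟩ <;>
    · rintro ⟨f, x, hx, ⟨i, rfl⟩, ⟨j, rfl⟩⟩
      exact ⟨f, g ∘ x, hpos f x hx, ⟨i, rfl⟩, ⟨j, rfl⟩⟩

end

theorem TreewidthAtMost.comap {V V' : Type} [Finite V] {G : SimpleGraph V} {G' : SimpleGraph V'}
    (φ : G' →g G) (hφ : Injective φ) {k : ℕ} (h : TreewidthAtMost G k) : TreewidthAtMost G' k := by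
  obtain ⟨T, tG, β, hdec, hcard⟩ := h
  refine ⟨T, tG, fun t => φ ⁻¹' β t, ⟨hdec.isTree, fun v => hdec.covers (φ v),
    fun u v huv => hdec.edges (φ.map_adj huv), fun v => hdec.conn (φ v)⟩, fun t => ?_⟩
  exact (Set.ncard_le_ncard_of_injOn φ (fun _ h => h) hφ.injOn (Set.toFinite _)).trans (hcard t)

/-- The treewidth of a core of `A` is at most the treewidth of `A`. -/
theorem stmt8 (A A' : VStruct S ar) (hcore : IsCore A') (hequiv : VEquiv A' A)
    (k : ℕ) (h : TreewidthAtMost (gaifman A) k) :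
    TreewidthAtMost (gaifman A') k := by
  obtain ⟨ω₁, hω₁⟩ := exists_isIFH_of_improves fun C => (hequiv C).le
  obtain ⟨ω₂, hω₂⟩ := exists_isIFH_of_improves fun C => (hequiv C).ge
  obtain ⟨g, hg⟩ := hω₁.exists_ne_zero
  obtain ⟨g', hg'⟩ := hω₂.exists_ne_zero
  have hsurj : Surjective (g' ∘ g) :=
    hcore _ (hω₁.comp hω₂) _ (pos_iff_ne_zero.2 (ifhComp_ne_zero hg hg'))
  have hinj : Injective g := (Finite.injective_iff_surjective.2 hsurj).of_comp
  exact h.comap (gaifmanHom g hinj fun _ _ => hω₁.val_pos hg) hinj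
end
end

section
/- Any separator of two covers of a bramble is itself a cover of that bramble. Precisely: let G be a graph, B a bramble of G, and X, Y ⊆ V(G) two covers of B. If Z ⊆ V(G) separates X from Y in G (every path from a vertex of X to a vertex of Y meets Z), then Z covers B. -/
open scoped Classical
noncomputable section

/-- A bramble: a family of connected, pairwise touching vertex sets. -/
def IsBramble {V : Type} (G : SimpleGraph V) (B : Set (Set V)) : Prop :=
  (∀ b ∈ B, (G.induce b).Connected) ∧
  ∀ b₁ ∈ B, ∀ b₂ ∈ B,
    (b₁ ∩ b₂).Nonempty ∨ ∃ u ∈ b₁, ∃ v ∈ b₂, G.Adj u v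

/-- `X` covers the bramble `B`: it meets every member of `B`. -/
def Covers {V : Type} (X : Set V) (B : Set (Set V)) : Prop :=
  ∀ b ∈ B, (X ∩ b).Nonempty

namespace SimpleGraph

variable {V : Type} {G : SimpleGraph V}

def Separates (G : SimpleGraph V) (Z X Y : Set V) : Prop :=
  ∀ u ∈ X, ∀ v ∈ Y, ∀ p : G.Walk u v, ∃ z ∈ p.support, z ∈ Z

lemma Reachable.exists_walk_support_subset_of_induce {s : Set V} {u v : s}
    (h : (G.induce s).Reachable u v) : ∃ p : G.Walk u v, ∀ z ∈ p.support, z ∈ s := by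
  obtain ⟨q⟩ := h
  refine ⟨q.map (Embedding.induce s).toHom, fun z hz => ?_⟩
  obtain ⟨w, -, rfl⟩ := List.mem_map.mp (Walk.support_map (Embedding.induce s).toHom q ▸ hz)
  exact w.2

lemma Connected.inter_nonempty_of_separates {s X Y Z : Set V} (hs : (G.induce s).Connected)
    (hX : (X ∩ s).Nonempty) (hY : (Y ∩ s).Nonempty) (hZ : G.Separates Z X Y) :
    (Z ∩ s).Nonempty := by
  obtain ⟨x, hxX, hxs⟩ := hX
  obtain ⟨y, hyY, hys⟩ := hY
  obtain ⟨p, hps⟩ := (hs ⟨x, hxs⟩ ⟨y, hys⟩).exists_walk_support_subset_of_induce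
  obtain ⟨z, hzp, hzZ⟩ := hZ x hxX y hyY p
  exact ⟨z, hzZ, hps z hzp⟩

end SimpleGraph

/-- Any separator of two covers of a bramble is itself a cover of that
bramble. -/
theorem stmt15 {V : Type} (G : SimpleGraph V) (B : Set (Set V))
    (hB : IsBramble G B) (X Y Z : Set V)
    (hX : Covers X B) (hY : Covers Y B)
    (hZ : ∀ u ∈ X, ∀ v ∈ Y, ∀ p : G.Walk u v, ∃ z ∈ p.support, z ∈ Z) :
    Covers Z B :=
  fun b hb => (hB.1 b hb).inter_nonempty_of_separates (hX b hb) (hY b hb) hZ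
end
end

section
/- For n ≥ 1 consider the directed n×n grid with vertex set {1,…,n}², arcs from (i,j) to (i',j') whenever i ≤ i', j ≤ j' and (i'−i)+(j'−j) = 1, and the path weight function ψ defined by: for an arc ((i,j),(i',j')) ending in diagonal k = i'+j'−1 ≤ n, ψ = j/(i+j) if i'=i and ψ = i/(i+j) if j'=j; for an arc ending in diagonal k > n, ψ = (n−j'+1)/(2n−i'−j'+1) if i'=i and ψ = (n−i'+1)/(2n−i'−j'+1) if j'=j. Then for every vertex (i,j) in diagonal k (i.e., i+j−1 = k), the sum over all monotone paths P from (1,1) to (n,n) passing through (i,j) of the product of ψ over the arcs of P equals 1/k if k ≤ n and 1/(2n−k) if k > n. -/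
open scoped Classical
noncomputable section

/-- Arc of the directed grid, in 1-based coordinates. -/
def gArc (a b : ℕ × ℕ) : Prop :=
  (b.1 = a.1 + 1 ∧ b.2 = a.2) ∨ (b.1 = a.1 ∧ b.2 = a.2 + 1)

/-- The weight `ψ` of an arc `(a, b)` of the `n × n` grid. -/
def psi (n : ℕ) (a b : ℕ × ℕ) : ℚ :=
  if b.1 + b.2 - 1 ≤ n then
    (if b.1 = a.1 then (a.2 : ℚ) / ((a.1 : ℚ) + (a.2 : ℚ))
     else (a.1 : ℚ) / ((a.1 : ℚ) + (a.2 : ℚ)))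
  else
    (if b.1 = a.1 then ((n - b.2 + 1 : ℕ) : ℚ) / ((2 * n - b.1 - b.2 + 1 : ℕ) : ℚ)
     else ((n - b.1 + 1 : ℕ) : ℚ) / ((2 * n - b.1 - b.2 + 1 : ℕ) : ℚ))

/-- 1-based coordinates of a grid vertex. -/
def toNN {n : ℕ} (v : Fin n × Fin n) : ℕ × ℕ := (v.1.val + 1, v.2.val + 1)

/-- `P` is a monotone path from `(1,1)` to `(n,n)` (a sequence of `2n-1`
vertices, consecutive ones forming arcs). -/
def IsMonoPath (n : ℕ) (P : Fin (2 * n - 1) → Fin n × Fin n) : Prop :=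
  (∀ h0 : 0 < 2 * n - 1, toNN (P ⟨0, h0⟩) = (1, 1)) ∧
  (∀ hl : 2 * n - 2 < 2 * n - 1, toNN (P ⟨2 * n - 2, hl⟩) = (n, n)) ∧
  ∀ (m : ℕ) (hm : m + 1 < 2 * n - 1),
    gArc (toNN (P ⟨m, by omega⟩)) (toNN (P ⟨m + 1, hm⟩))

/-- The product of `ψ` over the arcs of a path. -/
def pathWeight (n : ℕ) (P : Fin (2 * n - 1) → Fin n × Fin n) : ℚ :=
  ∏ m : Fin (2 * n - 2),
    psi n (toNN (P ⟨m.val, by have := m.isLt; omega⟩))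
          (toNN (P ⟨m.val + 1, by have := m.isLt; omega⟩))

/-!
Encode the weights as the transfer matrix `Ψ`, with `Ψ u v = ψ(u, v)` on arcs and `0` elsewhere.
A monotone path visits its vertex on diagonal `d` at step `d - 1`, so the total weight of the
paths through `v` factors as `(Ψ ^ (d - 1)) (1,1) v * (Ψ ^ (2n - 1 - d)) v (n,n)`; vertex
sequences that are not paths contribute `0`. Since `Ψ` only joins consecutive diagonals, both
factors are computed diagonal by diagonal. The outgoing weights of each vertex sum to `1`, so the
second factor is `1`. The incoming weights of a vertex on diagonal `d` sum to `w d / w (d - 1)`,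
where `w d = 1/d` for `d ≤ n` and `w d = 1/(2n - d)` beyond, so the first factor is `w d`.
-/

open Finset

section WalkSums

variable {V R : Type*} [CommSemiring R]

def walkProd (A : Matrix V V R) {L : ℕ} (P : Fin (L + 1) → V) : R :=
  ∏ i : Fin L, A (P i.castSucc) (P i.succ)

theorem walkProd_snoc (A : Matrix V V R) {L : ℕ} (P : Fin (L + 1) → V) (x : V) :
    walkProd A (Fin.snoc P x : Fin (L + 2) → V) = walkProd A P * A (P (Fin.last L)) x := by
  rw [walkProd, walkProd, Fin.prod_univ_castSucc]
  simp only [Fin.succ_castSucc, Fin.snoc_castSucc, Fin.succ_last, Fin.snoc_last]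

variable [Fintype V] [DecidableEq V]

theorem sum_walkProd_snoc (A : Matrix V V R) {L : ℕ} (C : (Fin (L + 1) → V) → Prop)
    [DecidablePred C] (t : V) :
    ∑ P : Fin (L + 2) → V with C (Fin.init P) ∧ P (Fin.last _) = t, walkProd A P =
      ∑ u, (∑ Q : Fin (L + 1) → V with C Q ∧ Q (Fin.last L) = u, walkProd A Q) * A u t := by
  rw [sum_filter, ← (Fin.snocEquiv fun _ => V).sum_comp, Fintype.sum_prod_type, sum_comm]
  simp only [sum_filter, sum_mul, ite_mul, zero_mul, Fin.snocEquiv, Equiv.coe_fn_mk,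
    Fin.init_snoc, Fin.snoc_last, walkProd_snoc, ite_and]
  conv_rhs => rw [sum_comm]
  refine sum_congr rfl fun Q _ => ?_
  split_ifs <;> simp

theorem sum_walkProd_eq_pow (A : Matrix V V R) (L : ℕ) (s t : V) :
    ∑ P : Fin (L + 1) → V with P 0 = s ∧ P (Fin.last L) = t, walkProd A P = (A ^ L) s t := by
  induction L generalizing t with
  | zero =>
    by_cases hst : s = t
    · subst hst
      rw [sum_filter, ← (Equiv.funUnique (Fin 1) V).symm.sum_comp]
      simp [walkProd]
    · rw [pow_zero, Matrix.one_apply_ne hst, sum_eq_zero]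
      intro P hP
      simp only [mem_filter, Fin.last_zero] at hP
      exact absurd (hP.2.1.symm.trans hP.2.2) hst
  | succ L ih =>
    rw [pow_succ, Matrix.mul_apply]
    simp_rw [← ih]
    convert sum_walkProd_snoc A (fun Q : Fin (L + 1) → V => Q 0 = s) t using 3
    simp [Fin.init]

theorem sum_walkProd_through_last (A : Matrix V V R) (L : ℕ) (s w t : V) :
    ∑ P : Fin (L + 1) → V with P 0 = s ∧ P (Fin.last L) = w ∧ P (Fin.last L) = t,
      walkProd A P = (A ^ L) s w * (1 : Matrix V V R) w t := by
  by_cases hwt : w = t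
  · subst hwt
    simp [← sum_walkProd_eq_pow]
  · rw [Matrix.one_apply_ne hwt, mul_zero, sum_eq_zero]
    intro P hP
    simp only [mem_filter] at hP
    exact absurd (hP.2.2.1.symm.trans hP.2.2.2) hwt

theorem sum_walkProd_through (A : Matrix V V R) {a L : ℕ} (ha : a ≤ L) (s w t : V) :
    ∑ P : Fin (L + 1) → V with P 0 = s ∧ P ⟨a, Nat.lt_succ_of_le ha⟩ = w ∧ P (Fin.last L) = t,
      walkProd A P = (A ^ a) s w * (A ^ (L - a)) w t := by
  induction L generalizing t with
  | zero =>
    obtain rfl : a = 0 := Nat.le_zero.mp ha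
    exact sum_walkProd_through_last A 0 s w t
  | succ L ih =>
    rcases Nat.lt_or_eq_of_le ha with ha | rfl
    · rw [Nat.sub_add_comm (Nat.le_of_lt_succ ha), pow_succ, Matrix.mul_apply, mul_sum]
      simp_rw [← mul_assoc, ← ih (Nat.le_of_lt_succ ha)]
      convert sum_walkProd_snoc A (fun Q : Fin (L + 1) → V => Q 0 = s ∧ Q ⟨a, ha⟩ = w) t using 3
      <;> simp [Fin.init, and_assoc]
    · rw [Nat.sub_self, pow_zero]
      exact sum_walkProd_through_last A _ s w t

-- For index types such as `Fin (2 * n - 1)` that are not syntactically a successor.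
theorem sum_prod_through_eq_pow_mul_pow (A : Matrix V V R) {N L a : ℕ} (hN : N = L + 1)
    (ha : a ≤ L) (s w t : V) :
    ∑ P ∈ univ.filter (fun P : Fin N → V =>
        P ⟨0, by omega⟩ = s ∧ P ⟨a, by omega⟩ = w ∧ P ⟨L, by omega⟩ = t),
      ∏ m : Fin L, A (P ⟨m, by omega⟩) (P ⟨m + 1, by omega⟩) =
      (A ^ a) s w * (A ^ (L - a)) w t := by
  subst hN
  convert sum_walkProd_through A ha s w t using 3 with P
  · simp [Fin.last]
  · rfl

end WalkSums

section Graded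

variable {V R : Type*} [Fintype V] [DecidableEq V] [CommSemiring R] {A : Matrix V V R}
  {ℓ : V → ℕ}

theorem pow_apply_eq_of_graded_col_sum (hA : ∀ u v, A u v ≠ 0 → ℓ v = ℓ u + 1) {s : V}
    (hs : ∀ v, ℓ v = 0 → v = s) {c : ℕ → R} (hc₀ : c 0 = 1)
    (hc : ∀ k v, ℓ v = k + 1 → c k * ∑ u, A u v = c (k + 1)) (v : V) :
    (A ^ ℓ v) s v = c (ℓ v) := by
  suffices h : ∀ a v, ℓ v = a → (A ^ a) s v = c a from h _ v rfl
  intro a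
  induction a with
  | zero =>
    intro v hv
    rw [hs v hv, pow_zero, Matrix.one_apply_eq, hc₀]
  | succ a ih =>
    intro v hv
    rw [pow_succ, Matrix.mul_apply, ← hc a v hv, mul_sum]
    refine sum_congr rfl fun u _ => ?_
    by_cases huv : A u v = 0
    · rw [huv, mul_zero, mul_zero]
    · rw [ih u (by have := hA u v huv; omega)]

theorem pow_apply_eq_one_of_graded_row_sum (hA : ∀ u v, A u v ≠ 0 → ℓ v = ℓ u + 1)
    {D : ℕ} {t : V} (hℓ : ∀ v, ℓ v ≤ D) (ht : ∀ v, ℓ v = D → v = t)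
    (hrow : ∀ v, ℓ v < D → ∑ u, A v u = 1)
    (v : V) : (A ^ (D - ℓ v)) v t = 1 := by
  have key := pow_apply_eq_of_graded_col_sum (A := A.transpose) (ℓ := fun v => D - ℓ v) (s := t)
    (c := fun _ => 1) ?_ ?_ rfl ?_ v
  · rwa [← Matrix.transpose_pow] at key
  · intro u w huw
    have := hA w u huw
    have := hℓ u
    omega
  · intro w hw
    exact ht w (by have := hℓ w; omega)
  · intro k w hw
    rw [one_mul]
    exact hrow w (by omega)

end Graded

section Grid

variable {n : ℕ}

def gridMatrix (n : ℕ) : Matrix (Fin n × Fin n) (Fin n × Fin n) ℚ :=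
  Matrix.of fun u v => if gArc (toNN u) (toNN v) then psi n (toNN u) (toNN v) else 0

def gridLevel (v : Fin n × Fin n) : ℕ := (v.1 : ℕ) + v.2

def gridOrigin (hn : 0 < n) : Fin n × Fin n := (⟨0, hn⟩, ⟨0, hn⟩)

def gridCorner (hn : 0 < n) : Fin n × Fin n :=
  (⟨n - 1, Nat.sub_lt hn one_pos⟩, ⟨n - 1, Nat.sub_lt hn one_pos⟩)

theorem toNN_injective : Function.Injective (toNN (n := n)) := by
  intro u v h
  simp only [toNN, Prod.mk.injEq, add_left_inj] at h
  exact Prod.ext (Fin.ext h.1) (Fin.ext h.2)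

theorem toNN_eq_iff_eq_gridOrigin (hn : 0 < n) {u : Fin n × Fin n} :
    toNN u = (1, 1) ↔ u = gridOrigin hn :=
  ⟨fun h => toNN_injective (h.trans rfl), fun h => h ▸ rfl⟩

theorem toNN_eq_iff_eq_gridCorner (hn : 0 < n) {u : Fin n × Fin n} :
    toNN u = (n, n) ↔ u = gridCorner hn := by
  have : toNN (gridCorner hn) = (n, n) := by simp [toNN, gridCorner]; omega
  exact ⟨fun h => toNN_injective (h.trans this.symm), fun h => h ▸ this⟩

theorem gArc_toNN_iff_eq_succ (u v : Fin n × Fin n) :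
    gArc (toNN u) (toNN v) ↔
      toNN v = ((u.1 : ℕ) + 2, (u.2 : ℕ) + 1) ∨ toNN v = ((u.1 : ℕ) + 1, (u.2 : ℕ) + 2) := by
  simp only [gArc, toNN, Prod.ext_iff]

theorem gArc_toNN_iff_eq_pred (u v : Fin n × Fin n) :
    gArc (toNN u) (toNN v) ↔
      toNN u = ((v.1 : ℕ), (v.2 : ℕ) + 1) ∨ toNN u = ((v.1 : ℕ) + 1, (v.2 : ℕ)) := by
  simp only [gArc, toNN, Prod.ext_iff]
  omega

theorem gridLevel_eq_of_gArc {u v : Fin n × Fin n} (h : gArc (toNN u) (toNN v)) :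
    gridLevel v = gridLevel u + 1 := by
  simp only [gArc, toNN] at h
  simp only [gridLevel]
  omega

theorem gridLevel_le (v : Fin n × Fin n) : gridLevel v ≤ 2 * n - 2 := by
  simp only [gridLevel]
  omega

theorem gridMatrix_apply_of_gArc {u v : Fin n × Fin n} (h : gArc (toNN u) (toNN v)) :
    gridMatrix n u v = psi n (toNN u) (toNN v) :=
  if_pos h

theorem gridMatrix_apply_of_not_gArc {u v : Fin n × Fin n} (h : ¬gArc (toNN u) (toNN v)) :
    gridMatrix n u v = 0 :=
  if_neg h

theorem gridLevel_eq_of_gridMatrix_ne_zero {u v : Fin n × Fin n} (h : gridMatrix n u v ≠ 0) :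
    gridLevel v = gridLevel u + 1 :=
  gridLevel_eq_of_gArc (not_not.mp (mt gridMatrix_apply_of_not_gArc h))

theorem psi_succ_fst {x y : ℕ} (hx : x < n) (hy : y ≤ n) :
    psi n (x, y) (x + 1, y) =
      if x + y ≤ n then (x : ℚ) / (x + y) else ((n : ℚ) - x) / (2 * n - x - y) := by
  have e₁ : n - (x + 1) + 1 = n - x := by omega
  have e₂ : 2 * n - (x + 1) - y + 1 = 2 * n - x - y := by omega
  have c₁ : ((n - x : ℕ) : ℚ) = n - x := Nat.cast_sub hx.le
  have c₂ : ((2 * n - x - y : ℕ) : ℚ) = 2 * n - x - y := by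
    rw [Nat.cast_sub (by omega), Nat.cast_sub (by omega)]
    push_cast
    ring
  simp only [psi, show x + 1 + y - 1 = x + y by omega, e₁, e₂, c₁, c₂, Nat.succ_ne_self,
    if_false]

theorem psi_succ_snd {x y : ℕ} (hx : x ≤ n) (hy : y < n) :
    psi n (x, y) (x, y + 1) =
      if x + y ≤ n then (y : ℚ) / (x + y) else ((n : ℚ) - y) / (2 * n - x - y) := by
  have e₁ : n - (y + 1) + 1 = n - y := by omega
  have e₂ : 2 * n - x - (y + 1) + 1 = 2 * n - x - y := by omega
  have c₁ : ((n - y : ℕ) : ℚ) = n - y := Nat.cast_sub hy.le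
  have c₂ : ((2 * n - x - y : ℕ) : ℚ) = 2 * n - x - y := by
    rw [Nat.cast_sub (by omega), Nat.cast_sub (by omega)]
    push_cast
    ring
  simp only [psi, show x + (y + 1) - 1 = x + y by omega, e₁, e₂, c₁, c₂, if_true]

theorem sum_ite_toNN_eq {M : Type*} [AddCommMonoid M] (g : ℕ × ℕ → M) (p : ℕ × ℕ) :
    ∑ c : Fin n × Fin n, (if toNN c = p then g (toNN c) else 0) =
      if 1 ≤ p.1 ∧ p.1 ≤ n ∧ 1 ≤ p.2 ∧ p.2 ≤ n then g p else 0 := by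
  split_ifs with hp
  · obtain ⟨c₀, rfl⟩ : ∃ c₀ : Fin n × Fin n, toNN c₀ = p :=
      ⟨(⟨p.1 - 1, by omega⟩, ⟨p.2 - 1, by omega⟩), by simp only [toNN, Prod.ext_iff]; omega⟩
    simp [toNN_injective.eq_iff]
  · refine sum_eq_zero fun c _ => if_neg ?_
    rintro rfl
    exact hp (by simp only [toNN]; omega)

theorem sum_gridMatrix_row_eq (v : Fin n × Fin n) :
    ∑ c, gridMatrix n v c =
      (if (v.1 : ℕ) + 2 ≤ n then psi n (v.1 + 1, v.2 + 1) (v.1 + 1 + 1, v.2 + 1) else 0) +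
      (if (v.2 : ℕ) + 2 ≤ n then psi n (v.1 + 1, v.2 + 1) (v.1 + 1, v.2 + 1 + 1) else 0) := by
  have hsplit : ∀ c, gridMatrix n v c =
      (if toNN c = ((v.1 : ℕ) + 2, (v.2 : ℕ) + 1) then psi n (toNN v) (toNN c) else 0) +
      (if toNN c = ((v.1 : ℕ) + 1, (v.2 : ℕ) + 2) then psi n (toNN v) (toNN c) else 0) := by
    intro c
    rw [gridMatrix, Matrix.of_apply, if_congr (gArc_toNN_iff_eq_succ v c) rfl rfl]
    by_cases h : toNN c = ((v.1 : ℕ) + 2, (v.2 : ℕ) + 1) <;> simp [h]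
  simp only [hsplit, sum_add_distrib, sum_ite_toNN_eq]
  congr 1 <;> refine if_congr (by omega) rfl rfl

theorem sum_gridMatrix_col_eq (v : Fin n × Fin n) :
    ∑ u, gridMatrix n u v =
      (if 1 ≤ (v.1 : ℕ) then psi n (v.1, v.2 + 1) (v.1 + 1, v.2 + 1) else 0) +
      (if 1 ≤ (v.2 : ℕ) then psi n (v.1 + 1, v.2) (v.1 + 1, v.2 + 1) else 0) := by
  have hsplit : ∀ u, gridMatrix n u v =
      (if toNN u = ((v.1 : ℕ), (v.2 : ℕ) + 1) then psi n (toNN u) (toNN v) else 0) +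
      (if toNN u = ((v.1 : ℕ) + 1, (v.2 : ℕ)) then psi n (toNN u) (toNN v) else 0) := by
    intro u
    rw [gridMatrix, Matrix.of_apply, if_congr (gArc_toNN_iff_eq_pred u v) rfl rfl]
    by_cases h : toNN u = ((v.1 : ℕ), (v.2 : ℕ) + 1) <;> simp [h]
  simp only [hsplit, sum_add_distrib,
    sum_ite_toNN_eq (fun p => psi n p (toNN v))]
  congr 1 <;> refine if_congr (by omega) rfl rfl

theorem sum_gridMatrix_row (v : Fin n × Fin n) (hv : gridLevel v < 2 * n - 2) :
    ∑ c, gridMatrix n v c = 1 := by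
  obtain ⟨⟨i, hi⟩, ⟨j, hj⟩⟩ := v
  simp only [gridLevel] at hv
  rw [sum_gridMatrix_row_eq]
  dsimp only
  have hD : (2 * n - (i + 1) - (j + 1) : ℚ) ≠ 0 := by
    have : (i : ℚ) + j + 2 < 2 * n := by exact_mod_cast (by omega : i + j + 2 < 2 * n)
    linarith
  split_ifs with h₁ h₂ h₂
  · rw [psi_succ_fst (by omega) (by omega), psi_succ_snd (by omega) (by omega)]
    push_cast
    split_ifs
    · rw [← add_div, div_self (by positivity)]
    · rw [← add_div, div_eq_one_iff_eq hD]
      ring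
  · obtain rfl : n = j + 1 := by omega
    rw [psi_succ_fst (by omega) (by omega), if_neg (by omega), add_zero]
    push_cast at hD ⊢
    rw [div_eq_one_iff_eq hD]
    ring
  · obtain rfl : n = i + 1 := by omega
    rw [psi_succ_snd (by omega) (by omega), if_neg (by omega), zero_add]
    push_cast at hD ⊢
    rw [div_eq_one_iff_eq hD]
    ring
  · omega

theorem sum_gridMatrix_col (v : Fin n × Fin n) :
    ∑ u, gridMatrix n u v =
      if gridLevel v + 1 ≤ n then (gridLevel v : ℚ) / (gridLevel v + 1)
      else (2 * n - gridLevel v : ℚ) / (2 * n - gridLevel v - 1) := by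
  obtain ⟨⟨i, hi⟩, ⟨j, hj⟩⟩ := v
  rw [sum_gridMatrix_col_eq]
  dsimp only [gridLevel]
  rw [psi_succ_fst hi (by omega), psi_succ_snd (by omega) hj,
    show i + (j + 1) = i + j + 1 by ring, show i + 1 + j = i + j + 1 by ring]
  push_cast
  by_cases hlow : i + j + 1 ≤ n
  · -- a predecessor missing on the boundary would have weight `0` anyway
    have hvanish : ∀ m : ℕ, (if 1 ≤ m then (m : ℚ) / (i + j + 1) else 0) = m / (i + j + 1) := by
      intro m
      split_ifs with hm
      · rfl
      · simp [show m = 0 by omega]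
    rw [if_pos hlow, if_pos hlow, if_pos hlow, show (i : ℚ) + (j + 1) = i + j + 1 by ring,
      show (i : ℚ) + 1 + j = i + j + 1 by ring, hvanish, hvanish, ← add_div]
  · have hD : (2 * n - i - j - 1 : ℚ) ≠ 0 := by
      have : (i : ℚ) + j + 1 < 2 * n := by exact_mod_cast (by omega : i + j + 1 < 2 * n)
      linarith
    simp only [if_neg hlow, if_pos (show 1 ≤ i by omega), if_pos (show 1 ≤ j by omega)]
    field_simp
    ring

def diagWeight (n k : ℕ) : ℚ :=
  if k ≤ n then 1 / (k : ℚ) else 1 / ((2 * n - k : ℕ) : ℚ)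

theorem diagWeight_mul_eq_diagWeight_succ {m : ℕ} (hm : 1 ≤ m) (hmn : m + 2 ≤ 2 * n) :
    diagWeight n m * (if m + 1 ≤ n then (m : ℚ) / (m + 1) else (2 * n - m : ℚ) / (2 * n - m - 1)) =
      diagWeight n (m + 1) := by
  have c₁ : ((2 * n - m : ℕ) : ℚ) = 2 * n - m := by
    rw [Nat.cast_sub (by omega)]
    push_cast
    ring
  have c₂ : ((2 * n - (m + 1) : ℕ) : ℚ) = 2 * n - m - 1 := by
    rw [Nat.cast_sub (by omega)]
    push_cast
    ring
  have hm' : (m : ℚ) + 2 ≤ 2 * n := by exact_mod_cast hmn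
  have h₁ : (2 * n - m : ℚ) ≠ 0 := by linarith
  have h₂ : (2 * n - m - 1 : ℚ) ≠ 0 := by linarith
  have h₃ : (m : ℚ) ≠ 0 := by positivity
  simp only [diagWeight, c₁, c₂, Nat.cast_add, Nat.cast_one]
  rcases Nat.lt_or_ge m n with h | h
  · rw [if_pos h.le, if_pos (by omega), if_pos (by omega)]
    field_simp
  · rcases h.eq_or_lt with rfl | h
    · rw [if_pos le_rfl, if_neg (by omega), if_neg (by omega)]
      field_simp
      ring
    · rw [if_neg (by omega), if_neg (by omega), if_neg (by omega)]
      field_simp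

theorem gridMatrix_pow_gridOrigin (hn : 0 < n) (v : Fin n × Fin n) :
    (gridMatrix n ^ gridLevel v) (gridOrigin hn) v = diagWeight n (gridLevel v + 1) := by
  refine pow_apply_eq_of_graded_col_sum (fun _ _ huw => gridLevel_eq_of_gridMatrix_ne_zero huw)
    ?_ (c := fun k => diagWeight n (k + 1)) ?_ ?_ v
  · intro w hw
    simp only [gridLevel] at hw
    exact Prod.ext (Fin.ext (by simp [gridOrigin]; omega)) (Fin.ext (by simp [gridOrigin]; omega))
  · simp [diagWeight, Nat.one_le_iff_ne_zero.mpr hn.ne']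
  · intro k w hw
    rw [sum_gridMatrix_col, hw]
    exact diagWeight_mul_eq_diagWeight_succ (by omega) (by have := gridLevel_le w; omega)

theorem gridMatrix_pow_gridCorner (hn : 0 < n) (v : Fin n × Fin n) :
    (gridMatrix n ^ (2 * n - 2 - gridLevel v)) v (gridCorner hn) = 1 := by
  refine pow_apply_eq_one_of_graded_row_sum
    (fun _ _ huw => gridLevel_eq_of_gridMatrix_ne_zero huw) gridLevel_le ?_
    sum_gridMatrix_row v
  intro w hw
  simp only [gridLevel] at hw
  exact Prod.ext (Fin.ext (by simp [gridCorner]; omega)) (Fin.ext (by simp [gridCorner]; omega))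

theorem gridLevel_of_chain {N : ℕ} {P : Fin N → Fin n × Fin n}
    (h₀ : ∀ h : 0 < N, toNN (P ⟨0, h⟩) = (1, 1))
    (hchain : ∀ (m : ℕ) (hm : m + 1 < N), gArc (toNN (P ⟨m, by omega⟩)) (toNN (P ⟨m + 1, hm⟩)))
    (m : ℕ) (hm : m < N) : gridLevel (P ⟨m, hm⟩) = m := by
  induction m with
  | zero =>
    have := h₀ hm
    simp only [toNN, Prod.ext_iff] at this
    simp only [gridLevel]
    omega
  | succ m ih => rw [gridLevel_eq_of_gArc (hchain m hm), ih]

theorem isMonoPath_through_iff_of_chain (hn : 0 < n) (v : Fin n × Fin n)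
    {P : Fin (2 * n - 1) → Fin n × Fin n}
    (hchain : ∀ (m : ℕ) (hm : m + 1 < 2 * n - 1),
      gArc (toNN (P ⟨m, by omega⟩)) (toNN (P ⟨m + 1, hm⟩))) :
    (IsMonoPath n P ∧ ∃ m, P m = v) ↔
      (P ⟨0, by omega⟩ = gridOrigin hn ∧
        P ⟨gridLevel v, by have := gridLevel_le v; omega⟩ = v ∧
        P ⟨2 * n - 2, by omega⟩ = gridCorner hn) := by
  simp only [IsMonoPath, toNN_eq_iff_eq_gridOrigin hn, toNN_eq_iff_eq_gridCorner hn]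
  constructor
  · rintro ⟨⟨h₀, hlast, -⟩, m, rfl⟩
    refine ⟨h₀ _, congrArg P (Fin.ext ?_), hlast _⟩
    exact gridLevel_of_chain (fun h => (toNN_eq_iff_eq_gridOrigin hn).mpr (h₀ h)) hchain _ _
  · rintro ⟨h₀, hv, hlast⟩
    exact ⟨⟨fun _ => h₀, fun _ => hlast, hchain⟩, _, hv⟩

theorem sum_pathWeight_through (hn : 0 < n) (v : Fin n × Fin n) :
    ∑ P ∈ univ.filter (fun P : Fin (2 * n - 1) → Fin n × Fin n =>
        IsMonoPath n P ∧ ∃ m, P m = v), pathWeight n P =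
      ∑ P ∈ univ.filter (fun P : Fin (2 * n - 1) → Fin n × Fin n =>
          P ⟨0, by omega⟩ = gridOrigin hn ∧
          P ⟨gridLevel v, by have := gridLevel_le v; omega⟩ = v ∧
          P ⟨2 * n - 2, by omega⟩ = gridCorner hn),
        ∏ m : Fin (2 * n - 2), gridMatrix n (P ⟨m, by omega⟩) (P ⟨m + 1, by omega⟩) := by
  rw [sum_filter, sum_filter]
  refine sum_congr rfl fun P _ => ?_
  by_cases hchain : ∀ (m : ℕ) (hm : m + 1 < 2 * n - 1),
      gArc (toNN (P ⟨m, by omega⟩)) (toNN (P ⟨m + 1, hm⟩))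
  · have hweight : pathWeight n P =
        ∏ m : Fin (2 * n - 2), gridMatrix n (P ⟨m, by omega⟩) (P ⟨m + 1, by omega⟩) :=
      prod_congr rfl fun m _ => (gridMatrix_apply_of_gArc (hchain m (by omega))).symm
    rw [hweight, if_congr (isMonoPath_through_iff_of_chain hn v hchain) rfl rfl]
  · have hnot : ¬IsMonoPath n P := fun h => hchain h.2.2
    simp only [not_forall] at hchain
    obtain ⟨m, hm, hbad⟩ := hchain
    rw [if_neg (fun h => hnot h.1),
      prod_eq_zero (mem_univ (⟨m, by omega⟩ : Fin (2 * n - 2)))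
        (gridMatrix_apply_of_not_gArc hbad), ite_self]

end Grid

/-- For every vertex `v` in diagonal `k`, the total `ψ`-weight of all monotone
paths from `(1,1)` to `(n,n)` through `v` is `1/k` if `k ≤ n` and `1/(2n-k)`
otherwise. -/
theorem stmt16 (n : ℕ) (hn : 1 ≤ n) (v : Fin n × Fin n) (k : ℕ)
    (hk : (toNN v).1 + (toNN v).2 - 1 = k) :
    (∑ P ∈ Finset.univ.filter (fun P : Fin (2 * n - 1) → Fin n × Fin n =>
        IsMonoPath n P ∧ ∃ m, P m = v), pathWeight n P) =
      if k ≤ n then 1 / (k : ℚ) else 1 / ((2 * n - k : ℕ) : ℚ) := by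
  obtain rfl : k = gridLevel v + 1 := by
    simp only [toNN, gridLevel] at hk ⊢
    omega
  rw [sum_pathWeight_through hn v,
    sum_prod_through_eq_pow_mul_pow (gridMatrix n) (by omega) (gridLevel_le v),
    gridMatrix_pow_gridOrigin hn, gridMatrix_pow_gridCorner hn, mul_one]
  rfl
end
end

section
/- Let G be a graph with a fixed connected component G₀ containing a distinguished vertex a₀, let B be a bramble of G all of whose members lie in G₀, and define S to be the family of subsets X of V(G) such that X does not cover B and X does not separate G₀ (i.e., there do not exist u, u' in V(G₀) \ X such that every path in G₀ between u and u' meets X). Then S is closed under intersection: if S₁, S₂ ∈ S then S₁ ∩ S₂ ∈ S. -/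
open scoped Classical
noncomputable section

/-- `X` separates the connected component `G₀` of `a₀`: there are two vertices
of `G₀` outside `X` such that every walk between them meets `X`. -/
def SepComp {V : Type} (G : SimpleGraph V) (a₀ : V) (X : Set V) : Prop :=
  ∃ u u' : V, G.Reachable a₀ u ∧ G.Reachable a₀ u' ∧ u ∉ X ∧ u' ∉ X ∧
    ∀ p : G.Walk u u', ∃ z ∈ p.support, z ∈ X

/-!
Pick `b₁ ∈ B` missing `X₁` and `b₂ ∈ B` missing `X₂`. Since `b₁` and `b₂` touch, `b₁ ∪ b₂` is a
connected set missing `X₁ ∩ X₂`. A vertex of `G₀` outside `X₁ ∩ X₂` lies outside `X₁` or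
outside `X₂`, so, as neither set separates `G₀`, it reaches `b₁` or `b₂` while avoiding that set,
hence while avoiding `X₁ ∩ X₂`. Any two such vertices are therefore joined through `b₁ ∪ b₂`.
-/

open Set

namespace SimpleGraph

variable {V : Type*} {G : SimpleGraph V}

theorem reachable_induce_iff_exists_walk {s : Set V} {u v : s} :
    (G.induce s).Reachable u v ↔ ∃ p : G.Walk u v, ∀ z ∈ p.support, z ∈ s := by
  constructor
  · rintro ⟨p⟩
    have hsupp : ∀ z ∈ (p.map (Embedding.induce s).toHom).support, z ∈ s := by
      intro z hz
      rw [Walk.support_map, List.mem_map] at hz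
      obtain ⟨w, -, rfl⟩ := hz
      exact w.2
    exact ⟨_, hsupp⟩
  · rintro ⟨p, hp⟩
    exact ⟨p.induce s hp⟩

end SimpleGraph

open SimpleGraph

variable {V : Type} {G : SimpleGraph V}

theorem IsBramble.induce_union_connected {B : Set (Set V)} (hB : IsBramble G B)
    {b₁ b₂ : Set V} (h₁ : b₁ ∈ B) (h₂ : b₂ ∈ B) : (G.induce (b₁ ∪ b₂)).Connected := by
  rcases hB.2 b₁ h₁ b₂ h₂ with hmeet | ⟨u, hu, v, hv, huv⟩
  · exact SimpleGraph.induce_union_connected (hB.1 b₁ h₁).preconnected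
      (hB.1 b₂ h₂).preconnected hmeet
  · exact connected_induce_union (hB.1 b₁ h₁).preconnected (hB.1 b₂ h₂).preconnected hu hv huv

theorem not_covers_iff {X : Set V} {B : Set (Set V)} :
    ¬ Covers X B ↔ ∃ b ∈ B, Disjoint X b := by
  simp [Covers, not_nonempty_iff_eq_empty, disjoint_iff_inter_eq_empty]

theorem not_sepComp_iff {a₀ : V} {X : Set V} :
    ¬ SepComp G a₀ X ↔ ∀ ⦃u v : V⦄, G.Reachable a₀ u → G.Reachable a₀ v →
      ∀ (hu : u ∉ X) (hv : v ∉ X), (G.induce Xᶜ).Reachable ⟨u, hu⟩ ⟨v, hv⟩ := by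
  simp only [SepComp, reachable_induce_iff_exists_walk, mem_compl_iff, not_exists, not_and,
    not_forall]

theorem not_sepComp_inter {a₀ : V} {X₁ X₂ C : Set V}
    (h₁ : ¬ SepComp G a₀ X₁) (h₂ : ¬ SepComp G a₀ X₂)
    (hC : (G.induce C).Preconnected) (hCX : C ⊆ (X₁ ∩ X₂)ᶜ)
    {c₁ c₂ : V} (hc₁ : c₁ ∈ C) (hc₂ : c₂ ∈ C) (hc₁X : c₁ ∉ X₁) (hc₂X : c₂ ∉ X₂)
    (hr₁ : G.Reachable a₀ c₁) : ¬ SepComp G a₀ (X₁ ∩ X₂) := by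
  rw [not_sepComp_iff] at h₁ h₂ ⊢
  have hc₂₁ : (G.induce (X₁ ∩ X₂)ᶜ).Reachable ⟨c₂, hCX hc₂⟩ ⟨c₁, hCX hc₁⟩ :=
    (hC ⟨c₂, hc₂⟩ ⟨c₁, hc₁⟩).map (G.induceHomOfLE hCX).toHom
  have hr₂ : G.Reachable a₀ c₂ := hr₁.trans (hc₂₁.symm.map (Embedding.induce _).toHom)
  have reach_c₁ : ∀ u (hu : u ∉ X₁ ∩ X₂), G.Reachable a₀ u →
      (G.induce (X₁ ∩ X₂)ᶜ).Reachable ⟨u, hu⟩ ⟨c₁, hCX hc₁⟩ := by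
    intro u hu hru
    by_cases hu₁ : u ∈ X₁
    · have hu₂ : u ∉ X₂ := fun h => hu ⟨hu₁, h⟩
      exact ((h₂ hru hr₂ hu₂ hc₂X).map
        (G.induceHomOfLE (compl_subset_compl.mpr inter_subset_right)).toHom).trans hc₂₁
    · exact (h₁ hru hr₁ hu₁ hc₁X).map
        (G.induceHomOfLE (compl_subset_compl.mpr inter_subset_left)).toHom
  intro u v hru hrv hu hv
  exact (reach_c₁ u hu hru).trans (reach_c₁ v hv hrv).symm

/-- The family of sets that neither cover the bramble `B` (whose members all
lie in the component `G₀` of `a₀`) nor separate `G₀` is closed under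
intersection. -/
theorem stmt18 {V : Type} (G : SimpleGraph V) (a₀ : V)
    (B : Set (Set V)) (hB : IsBramble G B)
    (hcomp : ∀ b ∈ B, ∀ v ∈ b, G.Reachable a₀ v)
    (X₁ X₂ : Set V)
    (h₁c : ¬ Covers X₁ B) (h₁s : ¬ SepComp G a₀ X₁)
    (h₂c : ¬ Covers X₂ B) (h₂s : ¬ SepComp G a₀ X₂) :
    ¬ Covers (X₁ ∩ X₂) B ∧ ¬ SepComp G a₀ (X₁ ∩ X₂) := by
  obtain ⟨b₁, hb₁, hX₁⟩ := not_covers_iff.mp h₁c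
  obtain ⟨b₂, hb₂, hX₂⟩ := not_covers_iff.mp h₂c
  refine ⟨not_covers_iff.mpr ⟨b₁, hb₁, hX₁.mono_left inter_subset_left⟩, ?_⟩
  obtain ⟨⟨c₁, hc₁⟩⟩ := (hB.1 b₁ hb₁).nonempty
  obtain ⟨⟨c₂, hc₂⟩⟩ := (hB.1 b₂ hb₂).nonempty
  have hunion : b₁ ∪ b₂ ⊆ (X₁ ∩ X₂)ᶜ := by
    rintro z (hz | hz) ⟨hz₁, hz₂⟩
    · exact hX₁.notMem_of_mem_left hz₁ hz
    · exact hX₂.notMem_of_mem_left hz₂ hz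
  exact not_sepComp_inter h₁s h₂s (hB.induce_union_connected hb₁ hb₂).preconnected hunion
    (Or.inl hc₁) (Or.inr hc₂) (hX₁.notMem_of_mem_right hc₁) (hX₂.notMem_of_mem_right hc₂)
    (hcomp b₁ hb₁ c₁ hc₁)
end
end
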